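/- arXiv:2506.15257 — 3 statements merged into one kernel-verified Lean document; each statement's English description precedes it below -/
import Mathlib

section
/- Let (a_n) be an arithmetic sequence, (e_n) an arithmetic-type sequence associated with (a_n). If t_{(e_n)}(𝕋) contains an element whose support is infinite, then t_{(e_n)}(𝕋) contains an element y whose support is infinite and satisfies: supp(y) ∩ (supp(y) + 1) = ∅, supp(y) is q-divergent, and c_n(y)/q_n → 0 as n → ∞ along supp(y), where (c_n(y)) are the canonical digits of y. -/
open Filter Topology

noncomputable section

/-- The circle group `𝕋 = ℝ/ℤ`. -/
abbrev Circle1 : Type := AddCircle (1 : ℝ)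

/-- An arithmetic sequence `(a_n)_{n ≥ 1}`, with the convention `a 0 = 1`:
a strictly increasing sequence of positive integers with `1 < a 1` and `a n ∣ a (n+1)`. -/
def IsArithSeq (a : ℕ → ℕ) : Prop :=
  a 0 = 1 ∧ StrictMono a ∧ ∀ n, a n ∣ a (n + 1)

/-- The ratio sequence: `q n = a n / a (n-1)` (so `q 1 = a 1`). -/
def ratioSeq (a : ℕ → ℕ) (n : ℕ) : ℕ := a n / a (n - 1)

/-- The subgroup of `𝕋` characterized by a sequence of integers `(u n)`. -/
def charSub (u : ℕ → ℕ) : Set Circle1 :=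
  {x : Circle1 | Tendsto (fun n => (u n) • x) atTop (nhds 0)}

/-- The set `{r·a_{k-1} : k ≥ 1, 1 ≤ r ≤ q_k - 1}` whose increasing enumeration is `(d_n)`. -/
def DSet (a : ℕ → ℕ) : Set ℕ :=
  {m | ∃ k, 1 ≤ k ∧ ∃ r, 1 ≤ r ∧ r ≤ ratioSeq a k - 1 ∧ m = r * a (k - 1)}

/-- `(d_n)` is the strictly increasing enumeration of `DSet a`. -/
def IsDSeq (a d : ℕ → ℕ) : Prop := StrictMono d ∧ Set.range d = DSet a

/-- An arithmetic-type sequence associated with the arithmetic sequence `(a_n)`: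
a strictly increasing sequence of positive integers whose set of values contains all the
values `a k` (for `k ≥ 1`) and is contained in `DSet a`. -/
def IsArithTypeSeq (a e : ℕ → ℕ) : Prop :=
  StrictMono e ∧ (∀ k, 1 ≤ k → a k ∈ Set.range e) ∧ Set.range e ⊆ DSet a

/-- `(c_n)_{n ≥ 1}` is the canonical representation of `x ∈ 𝕋` w.r.t. the arithmetic
sequence `(a_n)`: `0 ≤ c n ≤ q n - 1` for all `n ≥ 1`, `c n < q n - 1` infinitely often,
and `x = Σ_{n ≥ 1} c n / a n` in `𝕋`. -/
def IsCanonicalRep (a c : ℕ → ℕ) (x : Circle1) : Prop :=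
  (∀ n, 1 ≤ n → c n ≤ ratioSeq a n - 1) ∧
  {n | 1 ≤ n ∧ c n < ratioSeq a n - 1}.Infinite ∧
  x = ((∑' n : ℕ, (c (n + 1) : ℝ) / (a (n + 1) : ℝ) : ℝ) : Circle1)

/-- The support of a digit sequence: `supp(x) = {n ≥ 1 : c n ≠ 0}`. -/
def suppOf (c : ℕ → ℕ) : Set ℕ := {n | 1 ≤ n ∧ c n ≠ 0}

open Function Finset

/-!
Let `x = Σ c_n / a_n` and let `ξ_m ∈ [0, 1]` be the representative of `a_m x` given by the tail
of the series, so that `q_{m+1} ξ_m = c_{m+1} + ξ_{m+1}`. Rounding the `ξ_m` turns the `c_n` into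
signed digits `γ_{m+1} = c_{m+1} + round ξ_{m+1} - q_{m+1} round ξ_m` with
`γ_{m+1} / q_{m+1} = δ_m - δ_{m+1} / q_{m+1}`, where `δ_m = ξ_m - round ξ_m` and
`|δ_m| = ‖a_m x‖ → 0`. Hence for large `m` the digit `|γ_{m+1}|` is small compared to `q_{m+1}`,
and every multiple `u = t a_m < a_{m+1}` in `(e_n)` satisfies
`‖u γ_{m+1} / a_{m+1}‖ ≤ ‖u x‖ + |δ_{m+1}|`, which is small as well. Infinitely many `γ_m` are
nonzero, since otherwise the digits `c_n` would eventually be all `0` or all `q_n - 1`.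

The digits of `y` are such `|γ_m|`, the `j`-th one taken where these bounds hold with `2^{-j-1}`,
at positions at least two apart. The `j`-th term of `e_k y` is an integer once `e_k` is large and
is always within `2^{-j-1}` of an integer, so `e_k y → 0` by dominated convergence.
-/

namespace IsArithSeq

variable {a : ℕ → ℕ}

lemma pos (ha : IsArithSeq a) (n : ℕ) : 0 < a n :=
  lt_of_lt_of_le one_pos (ha.1 ▸ ha.2.1.monotone n.zero_le)

lemma dvd_of_le (ha : IsArithSeq a) {i j : ℕ} (h : i ≤ j) : a i ∣ a j := by
  induction j, h using Nat.le_induction with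
  | base => rfl
  | succ j _ ih => exact ih.trans (ha.2.2 j)

lemma ratioSeq_mul (ha : IsArithSeq a) (n : ℕ) : ratioSeq a (n + 1) * a n = a (n + 1) := by
  rw [ratioSeq, Nat.add_sub_cancel]
  exact Nat.div_mul_cancel (ha.2.2 n)

lemma cast_succ (ha : IsArithSeq a) (n : ℕ) :
    (a (n + 1) : ℝ) = ratioSeq a (n + 1) * a n := by
  exact_mod_cast (ha.ratioSeq_mul n).symm

lemma two_le_ratioSeq (ha : IsArithSeq a) (n : ℕ) : 2 ≤ ratioSeq a (n + 1) := by
  by_contra! h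
  have hle : ratioSeq a (n + 1) * a n ≤ 1 * a n := Nat.mul_le_mul_right _ (by omega)
  have hlt : a n < a (n + 1) := ha.2.1 n.lt_succ_self
  rw [ha.ratioSeq_mul] at hle
  omega

lemma ratioSeq_pos (ha : IsArithSeq a) (n : ℕ) : 0 < ratioSeq a (n + 1) :=
  lt_of_lt_of_le two_pos (ha.two_le_ratioSeq n)

lemma exists_of_mem_DSet (ha : IsArithSeq a) {u : ℕ} (hu : u ∈ DSet a) :
    ∃ k, a k ∣ u ∧ a k ≤ u ∧ u < a (k + 1) := by
  obtain ⟨k, hk, r, hr1, hr, rfl⟩ := hu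
  obtain ⟨k, rfl⟩ : ∃ j, k = j + 1 := ⟨k - 1, by omega⟩
  rw [Nat.add_sub_cancel]
  have hq := ha.two_le_ratioSeq k
  refine ⟨k, dvd_mul_left _ _, Nat.le_mul_of_pos_left _ hr1, ?_⟩
  calc r * a k < ratioSeq a (k + 1) * a k := Nat.mul_lt_mul_of_pos_right (by omega) (ha.pos k)
    _ = a (k + 1) := ha.ratioSeq_mul k

lemma dvd_of_mem_DSet (ha : IsArithSeq a) {u n : ℕ} (hu : u ∈ DSet a) (hn : a n ≤ u) :
    a n ∣ u := by
  obtain ⟨k, hdvd, -, hlt⟩ := ha.exists_of_mem_DSet hu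
  have hnk : n ≤ k := by
    by_contra! h
    have := ha.2.1.monotone (show k + 1 ≤ n from h)
    omega
  exact (ha.dvd_of_le hnk).trans hdvd

end IsArithSeq

lemma coe_intCast_eq_zero (z : ℤ) : ((z : ℝ) : Circle1) = 0 :=
  (AddCircle.coe_eq_zero_iff 1).2 ⟨z, by simp⟩

lemma coe_natCast_eq_zero (n : ℕ) : ((n : ℝ) : Circle1) = 0 := by
  exact_mod_cast coe_intCast_eq_zero n

lemma norm_coe_le_abs (t : ℝ) : ‖(t : Circle1)‖ ≤ |t| := by
  simpa [UnitAddCircle.norm_eq] using round_le t 0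

section Digits

variable {a c : ℕ → ℕ}

lemma digit_div_le (ha : IsArithSeq a) (hc : ∀ n, c (n + 1) < ratioSeq a (n + 1)) (n : ℕ) :
    (c (n + 1) : ℝ) / a (n + 1) ≤ 1 / a n - 1 / a (n + 1) := by
  have hcq : (c (n + 1) : ℝ) ≤ ratioSeq a (n + 1) - 1 := by
    have : (c (n + 1) : ℝ) + 1 ≤ ratioSeq a (n + 1) := by exact_mod_cast hc n
    linarith
  have hq : (0 : ℝ) < ratioSeq a (n + 1) := by exact_mod_cast ha.ratioSeq_pos n
  have ha0 : (0 : ℝ) < a n := by exact_mod_cast ha.pos n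
  calc (c (n + 1) : ℝ) / a (n + 1) ≤ (ratioSeq a (n + 1) - 1) / a (n + 1) := by gcongr
    _ = 1 / a n - 1 / a (n + 1) := by rw [ha.cast_succ]; field_simp

lemma sum_range_digit_div_le (ha : IsArithSeq a) (hc : ∀ n, c (n + 1) < ratioSeq a (n + 1))
    (m N : ℕ) : ∑ i ∈ range N, (c (i + m + 1) : ℝ) / a (i + m + 1) ≤ 1 / a m := by
  calc ∑ i ∈ range N, (c (i + m + 1) : ℝ) / a (i + m + 1)
      ≤ ∑ i ∈ range N, (1 / (a (i + m) : ℝ) - 1 / a (i + 1 + m)) :=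
        sum_le_sum fun i _ => by simpa only [add_right_comm i 1 m] using digit_div_le ha hc (i + m)
    _ = 1 / a m - 1 / a (N + m) := by
        rw [sum_range_sub' (fun i => 1 / (a (i + m) : ℝ)), zero_add]
    _ ≤ 1 / a m := sub_le_self _ (by positivity)

lemma summable_digit_div (ha : IsArithSeq a) (hc : ∀ n, c (n + 1) < ratioSeq a (n + 1))
    (m : ℕ) : Summable fun i => (c (i + m + 1) : ℝ) / a (i + m + 1) :=
  summable_of_sum_range_le (fun _ => by positivity) (sum_range_digit_div_le ha hc m)

/-- The representative in `[0, 1]` of `a_m • x`, for `x = Σ c_n / a_n`. -/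
def scaledTail (a c : ℕ → ℕ) (m : ℕ) : ℝ := a m * ∑' i, (c (i + m + 1) : ℝ) / a (i + m + 1)

lemma scaledTail_nonneg (m : ℕ) : 0 ≤ scaledTail a c m :=
  mul_nonneg (Nat.cast_nonneg _) (tsum_nonneg fun _ => by positivity)

lemma scaledTail_le_one (ha : IsArithSeq a) (hc : ∀ n, c (n + 1) < ratioSeq a (n + 1))
    (m : ℕ) : scaledTail a c m ≤ 1 := by
  have hm : (0 : ℝ) < a m := by exact_mod_cast ha.pos m
  calc scaledTail a c m ≤ a m * (1 / a m) := by
        rw [scaledTail]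
        gcongr
        exact Real.tsum_le_of_sum_range_le (fun _ => by positivity)
          (sum_range_digit_div_le ha hc m)
    _ = 1 := by field_simp

lemma scaledTail_mul_ratioSeq (ha : IsArithSeq a) (hc : ∀ n, c (n + 1) < ratioSeq a (n + 1))
    (m : ℕ) : scaledTail a c m * ratioSeq a (m + 1) = c (m + 1) + scaledTail a c (m + 1) := by
  have hsplit : ∑' i, (c (i + m + 1) : ℝ) / a (i + m + 1) =
      c (m + 1) / a (m + 1) + ∑' i, (c (i + (m + 1) + 1) : ℝ) / a (i + (m + 1) + 1) := by
    rw [(summable_digit_div ha hc m).tsum_eq_zero_add, zero_add]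
    exact congrArg _ (tsum_congr fun i => by ring_nf)
  have hq : (ratioSeq a (m + 1) : ℝ) ≠ 0 := by exact_mod_cast (ha.ratioSeq_pos m).ne'
  have ha0 : (a m : ℝ) ≠ 0 := by exact_mod_cast (ha.pos m).ne'
  rw [scaledTail, scaledTail, hsplit, ha.cast_succ]
  field_simp

lemma nsmul_coe_tsum_digit_div (ha : IsArithSeq a) (hc : ∀ n, c (n + 1) < ratioSeq a (n + 1))
    (t m : ℕ) : (t * a m) • ((∑' n, (c (n + 1) : ℝ) / a (n + 1) : ℝ) : Circle1) =
      ((t * scaledTail a c m : ℝ) : Circle1) := by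
  have hsplit := (summable_digit_div ha hc 0).sum_add_tsum_nat_add m
  simp only [add_zero] at hsplit
  have hint : ((t * a m : ℕ) : ℝ) * ∑ i ∈ range m, (c (i + 1) : ℝ) / a (i + 1) =
      ((∑ i ∈ range m, t * (a m / a (i + 1)) * c (i + 1) : ℕ) : ℝ) := by
    push_cast
    rw [mul_sum]
    refine sum_congr rfl fun i hi => ?_
    have hdvd := ha.dvd_of_le (Finset.mem_range.1 hi)
    rw [Nat.cast_div hdvd (by exact_mod_cast (ha.pos _).ne')]
    ring
  rw [← AddCircle.coe_nsmul, nsmul_eq_mul, ← hsplit, mul_add, hint, AddCircle.coe_add,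
    coe_natCast_eq_zero, zero_add, scaledTail, Nat.cast_mul, mul_assoc]

end Digits

section SignedDigits

variable {a c : ℕ → ℕ}

/-- The `n`-th digit of `x = Σ c_n / a_n` in the balanced expansion, whose carry at `m` is
`round (scaledTail a c m)`. -/
def signedDigit (a c : ℕ → ℕ) (n : ℕ) : ℤ :=
  c n + round (scaledTail a c n) - ratioSeq a n * round (scaledTail a c (n - 1))

lemma round_scaledTail_eq_zero_or_one (ha : IsArithSeq a)
    (hc : ∀ n, c (n + 1) < ratioSeq a (n + 1)) (m : ℕ) :
    round (scaledTail a c m) = 0 ∨ round (scaledTail a c m) = 1 := by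
  have h0 := scaledTail_nonneg (a := a) (c := c) m
  have h1 := scaledTail_le_one ha hc m
  have hlo : 0 ≤ round (scaledTail a c m) := by
    rw [round_eq]; exact Int.floor_nonneg.2 (by linarith)
  have hhi : round (scaledTail a c m) < 2 := by
    rw [round_eq, Int.floor_lt]; push_cast; linarith
  omega

lemma signedDigit_succ (ha : IsArithSeq a) (hc : ∀ n, c (n + 1) < ratioSeq a (n + 1)) (m : ℕ) :
    (signedDigit a c (m + 1) : ℝ) =
      ratioSeq a (m + 1) * (scaledTail a c m - round (scaledTail a c m)) -
        (scaledTail a c (m + 1) - round (scaledTail a c (m + 1))) := by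
  have := scaledTail_mul_ratioSeq ha hc m
  simp only [signedDigit, Nat.add_sub_cancel]
  push_cast
  linarith

/-- If the signed digits eventually vanish, the carries stabilise, so the digits `c_n` are
eventually all `0` or all `q_n - 1`. -/
lemma frequently_signedDigit_ne_zero (ha : IsArithSeq a)
    (hc : ∀ n, c (n + 1) < ratioSeq a (n + 1)) (hsupp : (suppOf c).Infinite)
    (hlt : {n | 1 ≤ n ∧ c n < ratioSeq a n - 1}.Infinite) :
    ∃ᶠ m in atTop, signedDigit a c (m + 1) ≠ 0 := by
  intro hzero
  obtain ⟨M, hM⟩ := eventually_atTop.1 hzero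
  set ρ := fun m => round (scaledTail a c m)
  have hstep : ∀ m ≥ M, ρ (m + 1) = ρ m ∧ (c (m + 1) : ℤ) = (ratioSeq a (m + 1) - 1) * ρ m := by
    intro m hm
    have h := hM m hm
    simp only [signedDigit, Nat.add_sub_cancel, not_not] at h
    have := hc m
    rcases round_scaledTail_eq_zero_or_one ha hc m with h0 | h0 <;>
      rcases round_scaledTail_eq_zero_or_one ha hc (m + 1) with h1 | h1 <;>
      simp only [ρ, h0, h1, mul_zero, mul_one, true_and] at h ⊢ <;> omega
  have hconst : ∀ m ≥ M, ρ m = ρ M := fun m hm => by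
    induction m, hm using Nat.le_induction with
    | base => rfl
    | succ m hm ih => exact (hstep m hm).1.trans ih
  have hdigit : ∀ n > M, (c n : ℤ) = (ratioSeq a n - 1) * ρ M := fun n hn => by
    obtain ⟨m, rfl⟩ : ∃ m, n = m + 1 := ⟨n - 1, by omega⟩
    rw [(hstep m (by omega)).2, hconst m (by omega)]
  rcases round_scaledTail_eq_zero_or_one ha hc M with h | h
  · refine hsupp ((Set.finite_le_nat M).subset fun n ⟨_, hn⟩ => ?_)
    show n ≤ M
    by_contra! hnM
    have := hdigit n hnM
    simp only [ρ, h, mul_zero] at this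
    omega
  · refine hlt ((Set.finite_le_nat M).subset fun n ⟨_, hn⟩ => ?_)
    show n ≤ M
    by_contra! hnM
    have := hdigit n hnM
    simp only [ρ, h, mul_one] at this
    omega

lemma norm_coe_mul_signedDigit_div_le (ha : IsArithSeq a)
    (hc : ∀ n, c (n + 1) < ratioSeq a (n + 1)) {m t : ℕ} (ht : t ≤ ratioSeq a (m + 1)) :
    ‖((t * signedDigit a c (m + 1) / ratioSeq a (m + 1) : ℝ) : Circle1)‖ ≤
      ‖((t * scaledTail a c m : ℝ) : Circle1)‖ +
        |scaledTail a c (m + 1) - round (scaledTail a c (m + 1))| := by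
  set δ := scaledTail a c (m + 1) - round (scaledTail a c (m + 1))
  have hq : (0 : ℝ) < ratioSeq a (m + 1) := by exact_mod_cast ha.ratioSeq_pos m
  have hsplit : (t * signedDigit a c (m + 1) / ratioSeq a (m + 1) : ℝ) =
      (t * scaledTail a c m - ((t * round (scaledTail a c m) : ℤ) : ℝ)) -
        t * δ / ratioSeq a (m + 1) := by
    rw [signedDigit_succ ha hc]
    push_cast
    field_simp
    ring
  rw [hsplit, AddCircle.coe_sub, AddCircle.coe_sub, coe_intCast_eq_zero, sub_zero]
  refine (norm_sub_le _ _).trans (add_le_add_right ((norm_coe_le_abs _).trans ?_) _)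
  rw [abs_div, abs_mul, abs_of_pos hq, Nat.abs_cast, div_le_iff₀ hq, mul_comm]
  gcongr

end SignedDigits

section GoodDigits

variable {a e : ℕ → ℕ}

def IsGoodDigit (a e : ℕ → ℕ) (ε : ℝ) (n β : ℕ) : Prop :=
  (β : ℝ) ≤ ε * ratioSeq a n ∧
    ∀ u ∈ Set.range e, a (n - 1) ∣ u → u < a n → ‖((u * β / a n : ℝ) : Circle1)‖ ≤ ε

lemma isGoodDigit_zero (n : ℕ) : IsGoodDigit a e 0 n 0 :=
  ⟨by simp, fun _ _ _ _ => by simp⟩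

variable {ε : ℝ} {n β : ℕ}

lemma IsGoodDigit.nonneg (ha : IsArithSeq a) (h : IsGoodDigit a e ε (n + 1) β) : 0 ≤ ε :=
  nonneg_of_mul_nonneg_left ((Nat.cast_nonneg β).trans h.1) (by exact_mod_cast ha.ratioSeq_pos n)

lemma IsGoodDigit.div_le (ha : IsArithSeq a) (h : IsGoodDigit a e ε (n + 1) β) :
    (β : ℝ) / a (n + 1) ≤ ε / a n := by
  have hq : (0 : ℝ) < ratioSeq a (n + 1) := by exact_mod_cast ha.ratioSeq_pos n
  have ha0 : (0 : ℝ) < a n := by exact_mod_cast ha.pos n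
  rw [ha.cast_succ, div_le_div_iff₀ (by positivity) ha0]
  nlinarith [h.1]

lemma IsGoodDigit.div_ratioSeq_le (ha : IsArithSeq a)
    (h : IsGoodDigit a e ε (n + 1) β) : (β : ℝ) / ratioSeq a (n + 1) ≤ ε :=
  (div_le_iff₀ (by exact_mod_cast ha.ratioSeq_pos n)).2 h.1

lemma IsGoodDigit.lt_ratioSeq (ha : IsArithSeq a)
    (h : IsGoodDigit a e ε (n + 1) β) (hε : ε < 1) : β < ratioSeq a (n + 1) := by
  have hq : (0 : ℝ) < ratioSeq a (n + 1) := by exact_mod_cast ha.ratioSeq_pos n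
  exact_mod_cast (div_lt_one hq).1 ((h.div_ratioSeq_le ha).trans_lt hε)

/-- Only the case `u ∈ [a_n, a_{n+1})` uses the definition: for smaller `u` the term is below
`β / q_{n+1}`, and for larger `u` it is an integer. -/
lemma IsGoodDigit.norm_coe_le (ha : IsArithSeq a) (hE : Set.range e ⊆ DSet a)
    (h : IsGoodDigit a e ε (n + 1) β) {u : ℕ} (hu : u ∈ Set.range e) :
    ‖((u * β / a (n + 1) : ℝ) : Circle1)‖ ≤ ε := by
  obtain ⟨k, hdvd, -, hlt⟩ := ha.exists_of_mem_DSet (hE hu)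
  rcases lt_trichotomy k n with hkn | rfl | hnk
  · have hu' : (u : ℝ) ≤ a n := by exact_mod_cast hlt.le.trans (ha.2.1.monotone hkn)
    have ha0 : (0 : ℝ) < a n := by exact_mod_cast ha.pos n
    refine (norm_coe_le_abs _).trans ?_
    rw [abs_of_nonneg (by positivity), mul_div_assoc]
    calc (u : ℝ) * (β / a (n + 1)) ≤ a n * (ε / a n) :=
          mul_le_mul hu' (h.div_le ha) (by positivity) ha0.le
      _ = ε := by field_simp
  · exact h.2 u hu (by simpa using hdvd) hlt
  · obtain ⟨t, rfl⟩ := (ha.dvd_of_le hnk).trans hdvd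
    have ha0 : (a (n + 1) : ℝ) ≠ 0 := by exact_mod_cast (ha.pos _).ne'
    rw [show ((a (n + 1) * t : ℕ) : ℝ) * β / a (n + 1) = ((t * β : ℕ) : ℝ) by
      push_cast; field_simp, coe_natCast_eq_zero, norm_zero]
    exact h.nonneg ha

/-- Dominated convergence: the `n`-th term of `e_m y` tends to `0` (it is an integer once
`a_n ∣ e_m`) and is bounded by `ε n`. -/
theorem mem_charSub_of_isGoodDigit (ha : IsArithSeq a) (he : IsArithTypeSeq a e)
    {b : ℕ → ℕ} {ε : ℕ → ℝ} (hε : Summable ε)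
    (hb : ∀ n, IsGoodDigit a e (ε (n + 1)) (n + 1) (b (n + 1))) :
    ((∑' n, (b (n + 1) : ℝ) / a (n + 1) : ℝ) : Circle1) ∈ charSub e := by
  have hε' : Summable fun n => ε (n + 1) := (summable_nat_add_iff 1).2 hε
  have hsum : Summable fun n => (b (n + 1) : ℝ) / a (n + 1) := by
    refine hε'.of_nonneg_of_le (fun n => by positivity) fun n => ((hb n).div_le ha).trans ?_
    exact div_le_self ((hb n).nonneg ha) (by exact_mod_cast ha.pos n)
  have hterm : ∀ m, e m • ((∑' n, (b (n + 1) : ℝ) / a (n + 1) : ℝ) : Circle1) =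
      ∑' n, ((e m * b (n + 1) / a (n + 1) : ℝ) : Circle1) := by
    intro m
    rw [← AddCircle.coe_nsmul, nsmul_eq_mul]
    simp_rw [mul_div_assoc]
    have h : HasSum (fun n => ((e m * ((b (n + 1) : ℝ) / a (n + 1)) : ℝ) : Circle1))
        ((e m * ∑' n, (b (n + 1) : ℝ) / a (n + 1) : ℝ) : Circle1) :=
      (hsum.hasSum.mul_left _).map (QuotientAddGroup.mk' _) continuous_quotient_mk'
    exact h.tsum_eq.symm
  show Tendsto _ _ _
  simp_rw [hterm]
  rw [← tsum_zero]
  refine tendsto_tsum_of_dominated_convergence hε' (fun n => ?_)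
    (.of_forall fun m n => (hb n).norm_coe_le ha he.2.2 ⟨m, rfl⟩)
  refine tendsto_const_nhds.congr' ?_
  filter_upwards [he.1.tendsto_atTop.eventually_ge_atTop (a (n + 1))] with m hm
  obtain ⟨t, ht⟩ := ha.dvd_of_mem_DSet (he.2.2 ⟨m, rfl⟩) hm
  have ha0 : (a (n + 1) : ℝ) ≠ 0 := by exact_mod_cast (ha.pos _).ne'
  rw [ht, show ((a (n + 1) * t : ℕ) : ℝ) * b (n + 1) / a (n + 1) = ((t * b (n + 1) : ℕ) : ℝ) by
    push_cast; field_simp, coe_natCast_eq_zero]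

end GoodDigits

section Construction

variable {a c e : ℕ → ℕ} {x : Circle1}

lemma eventually_norm_nsmul_le (ha : IsArithSeq a) (he : StrictMono e)
    (hx : x ∈ charSub e) {ε : ℝ} (hε : 0 < ε) :
    ∀ᶠ m in atTop, ∀ u ∈ Set.range e, a m ≤ u → ‖u • x‖ ≤ ε := by
  obtain ⟨M, hM⟩ := eventually_atTop.1 (NormedAddGroup.tendsto_nhds_zero.1 hx ε hε)
  filter_upwards [eventually_ge_atTop (e M)] with m hm
  rintro _ ⟨k, rfl⟩ hk
  exact (hM k (he.le_iff_le.1 (hm.trans ((ha.2.1.le_apply).trans hk)))).le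

lemma norm_coe_mul_natAbs_div (r d : ℝ) (z : ℤ) :
    ‖((r * z.natAbs / d : ℝ) : Circle1)‖ = ‖((r * z / d : ℝ) : Circle1)‖ := by
  rw [Nat.cast_natAbs, Int.cast_abs]
  rcases abs_choice (z : ℝ) with h | h <;> rw [h]
  rw [mul_neg, neg_div, AddCircle.coe_neg, norm_neg]

lemma isGoodDigit_natAbs_signedDigit (ha : IsArithSeq a) (he : IsArithTypeSeq a e)
    (hc : ∀ n, c (n + 1) < ratioSeq a (n + 1))
    (hxc : x = ((∑' n, (c (n + 1) : ℝ) / a (n + 1) : ℝ) : Circle1)) {ε : ℝ} {m : ℕ}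
    (hm : 1 ≤ m) (hsmall : ∀ u ∈ Set.range e, a m ≤ u → ‖u • x‖ ≤ ε / 2) :
    IsGoodDigit a e ε (m + 1) (signedDigit a c (m + 1)).natAbs := by
  have hnorm (t k : ℕ) : ‖((t * scaledTail a c k : ℝ) : Circle1)‖ = ‖(t * a k) • x‖ := by
    rw [hxc, nsmul_coe_tsum_digit_div ha hc]
  have herr (k : ℕ) (hk : m ≤ k) :
      |scaledTail a c k - round (scaledTail a c k)| ≤ ε / 2 := by
    have h := hnorm 1 k
    rw [Nat.cast_one, one_mul, one_mul] at h
    rw [← UnitAddCircle.norm_eq, h]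
    exact hsmall _ (he.2.1 k (by omega)) (ha.2.1.monotone hk)
  have hε : 0 ≤ ε := by linarith [(abs_nonneg _).trans (herr m le_rfl)]
  have hq : (1 : ℝ) ≤ ratioSeq a (m + 1) := by exact_mod_cast ha.ratioSeq_pos m
  refine ⟨?_, fun u hu hdvd hlt => ?_⟩
  · rw [Nat.cast_natAbs, Int.cast_abs, signedDigit_succ ha hc]
    refine (abs_sub _ _).trans ?_
    rw [abs_mul, Nat.abs_cast]
    calc _ ≤ ratioSeq a (m + 1) * (ε / 2) + ε / 2 := by gcongr <;> exact herr _ (by omega)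
      _ ≤ ε * ratioSeq a (m + 1) := by nlinarith
  · rw [Nat.add_sub_cancel] at hdvd
    obtain ⟨t, rfl⟩ := hdvd
    have htq : t ≤ ratioSeq a (m + 1) := by
      rw [← ha.ratioSeq_mul, mul_comm] at hlt
      exact (Nat.lt_of_mul_lt_mul_right hlt).le
    have hdiv : ((a m * t : ℕ) * (signedDigit a c (m + 1) : ℝ) / a (m + 1) : ℝ) =
        t * signedDigit a c (m + 1) / ratioSeq a (m + 1) := by
      have ha0 : (a m : ℝ) ≠ 0 := by exact_mod_cast (ha.pos m).ne'
      rw [ha.cast_succ]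
      push_cast
      field_simp
    rw [norm_coe_mul_natAbs_div, hdiv]
    refine (norm_coe_mul_signedDigit_div_le ha hc htq).trans
      (add_le_add ?_ (herr (m + 1) (by omega)) |>.trans_eq (add_halves ε))
    rw [hnorm, mul_comm]
    rcases t.eq_zero_or_pos with rfl | htpos
    · simp only [mul_zero, zero_smul, norm_zero]
      linarith
    · exact hsmall _ hu (Nat.le_mul_of_pos_right _ htpos)

lemma frequently_isGoodDigit (ha : IsArithSeq a) (he : IsArithTypeSeq a e)
    (hc : ∀ n, c (n + 1) < ratioSeq a (n + 1))
    (hxc : x = ((∑' n, (c (n + 1) : ℝ) / a (n + 1) : ℝ) : Circle1)) (hx : x ∈ charSub e)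
    (hsupp : (suppOf c).Infinite) (hlt : {n | 1 ≤ n ∧ c n < ratioSeq a n - 1}.Infinite)
    {ε : ℝ} (hε : 0 < ε) :
    ∃ᶠ m in atTop, ∃ β, 0 < β ∧ IsGoodDigit a e ε (m + 1) β := by
  have hev := (eventually_norm_nsmul_le ha he.1 hx (half_pos hε)).and (eventually_ge_atTop 1)
  exact ((frequently_signedDigit_ne_zero ha hc hsupp hlt).and_eventually hev).mono
    fun m ⟨hm0, hsmall, hm1⟩ =>
      ⟨_, Int.natAbs_pos.2 hm0, isGoodDigit_natAbs_signedDigit ha he hc hxc hm1 hsmall⟩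

end Construction

lemma exists_add_two_le_of_frequently {P : ℕ → ℕ → Prop} (h : ∀ j, ∃ᶠ n in atTop, P j n) :
    ∃ s : ℕ → ℕ, (∀ j, s j + 2 ≤ s (j + 1)) ∧ ∀ j, P j (s j) := by
  choose f hf hPf using fun j N => frequently_atTop.1 (h j) N
  refine ⟨fun j => Nat.rec (f 0 0) (fun j sj => f (j + 1) (sj + 2)) j, fun j => hf (j + 1) _, ?_⟩
  rintro (_ | j)
  · exact hPf 0 0
  · exact hPf (j + 1) _

lemma StrictMono.tendsto_atTop_inf_principal_range {β : Type*} {s : ℕ → ℕ} (hs : StrictMono s)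
    {f : ℕ → β} {l : Filter β} (h : Tendsto (f ∘ s) atTop l) :
    Tendsto f (atTop ⊓ 𝓟 (Set.range s)) l := by
  intro U hU
  obtain ⟨J, hJ⟩ := mem_atTop_sets.1 (h hU)
  rw [Filter.mem_map, mem_inf_principal]
  filter_upwards [eventually_ge_atTop (s J)]
  rintro n hn ⟨j, rfl⟩
  exact hJ j (hs.le_iff_le.1 hn)

section Extend

variable {a e s B : ℕ → ℕ}

lemma strictMono_of_add_two_le (hgap : ∀ j, s j + 2 ≤ s (j + 1)) : StrictMono s :=
  strictMono_nat_of_lt_succ fun j => by have := hgap j; omega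

lemma add_one_notMem_range_of_add_two_le (hgap : ∀ j, s j + 2 ≤ s (j + 1)) (i : ℕ) :
    s i + 1 ∉ Set.range s := by
  have hs := strictMono_of_add_two_le hgap
  rintro ⟨j, hj⟩
  rcases le_or_gt j i with hji | hij
  · have := hs.monotone hji; omega
  · have := hs.monotone (show i + 1 ≤ j from hij)
    have := hgap i
    omega

lemma suppOf_extend (hs : Injective s) (hs1 : ∀ j, 1 ≤ s j) (hB : ∀ j, B j ≠ 0) :
    suppOf (extend s B 0) = Set.range s := by
  ext n
  constructor
  · rintro ⟨-, hn⟩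
    by_contra h
    exact hn (by rw [extend_apply' _ _ _ h, Pi.zero_apply])
  · rintro ⟨j, rfl⟩
    exact ⟨hs1 j, by rw [hs.extend_apply]; exact hB j⟩

lemma isGoodDigit_extend {ε : ℕ → ℝ} (hs : Injective s)
    (h : ∀ j, IsGoodDigit a e (ε j) (s j) (B j)) (n : ℕ) :
    IsGoodDigit a e (extend s ε 0 n) n (extend s B 0 n) := by
  by_cases hn : ∃ j, s j = n
  · obtain ⟨j, rfl⟩ := hn
    rw [hs.extend_apply, hs.extend_apply]
    exact h j
  · rw [extend_apply' _ _ _ hn, extend_apply' _ _ _ hn]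
    exact isGoodDigit_zero n

lemma isCanonicalRep_extend (ha : IsArithSeq a) (hgap : ∀ j, s j + 2 ≤ s (j + 1))
    (hB : ∀ j, B j < ratioSeq a (s j)) :
    IsCanonicalRep a (extend s B 0)
      ((∑' n, ((extend s B 0 (n + 1) : ℕ) : ℝ) / a (n + 1) : ℝ) : Circle1) := by
  have hs := strictMono_of_add_two_le hgap
  refine ⟨fun n hn => ?_, ?_, rfl⟩
  · by_cases h : ∃ j, s j = n
    · obtain ⟨j, rfl⟩ := h
      rw [hs.injective.extend_apply]
      have := hB j
      omega
    · rw [extend_apply' _ _ _ h, Pi.zero_apply]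
      exact Nat.zero_le _
  · refine Set.infinite_of_injective_forall_mem (f := fun j => s j + 1)
      (fun i j hij => hs.injective (by simpa using hij)) fun j => ⟨by omega, ?_⟩
    obtain ⟨m, hm⟩ : ∃ m, s j = m := ⟨_, rfl⟩
    rw [extend_apply' _ _ _ (add_one_notMem_range_of_add_two_le hgap j), Pi.zero_apply, hm]
    have := ha.two_le_ratioSeq m
    omega

lemma tendsto_ratioSeq_inf_principal_range {ε : ℕ → ℝ} (hs : StrictMono s)
    (hB0 : ∀ j, 0 < B j) (hBq : ∀ j, B j < ratioSeq a (s j))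
    (hratio : ∀ j, (B j : ℝ) / ratioSeq a (s j) ≤ ε j) (hε : Tendsto ε atTop (𝓝 0)) :
    Tendsto (ratioSeq a) (atTop ⊓ 𝓟 (Set.range s)) atTop := by
  have hq (j : ℕ) : (0 : ℝ) < ratioSeq a (s j) := by exact_mod_cast (hB0 j).trans (hBq j)
  have hinv : Tendsto (fun j => ((ratioSeq a (s j) : ℝ))⁻¹) atTop (𝓝[>] 0) := by
    refine tendsto_nhdsWithin_iff.2
      ⟨squeeze_zero (fun j => inv_nonneg.2 (hq j).le) (fun j => ?_) hε,
        .of_forall fun j => inv_pos.2 (hq j)⟩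
    rw [inv_eq_one_div]
    exact (div_le_div_of_nonneg_right (by exact_mod_cast hB0 j) (hq j).le).trans (hratio j)
  refine hs.tendsto_atTop_inf_principal_range ((tendsto_natCast_atTop_iff (R := ℝ)).1 ?_)
  exact (tendsto_inv_nhdsGT_zero.comp hinv).congr fun j => inv_inv _

lemma tendsto_extend_div_ratioSeq {ε : ℕ → ℝ} (hs : StrictMono s)
    (hratio : ∀ j, (B j : ℝ) / ratioSeq a (s j) ≤ ε j) (hε : Tendsto ε atTop (𝓝 0)) :
    Tendsto (fun n => ((extend s B 0 n : ℕ) : ℝ) / ratioSeq a n) (atTop ⊓ 𝓟 (Set.range s)) (𝓝 0) :=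
  hs.tendsto_atTop_inf_principal_range <|
    squeeze_zero (fun _ => div_nonneg (Nat.cast_nonneg _) (Nat.cast_nonneg _))
      (fun j => by simpa only [comp_apply, hs.injective.extend_apply] using hratio j) hε

end Extend

/-- if `t_{(e_n)}(𝕋)` contains an element of infinite support, then it
contains an element `y` with infinite support `S` such that `S ∩ (S + 1) = ∅`, `S` is
`q`-divergent, and `c_n(y)/q_n → 0` along `S`. -/
theorem exists_sparse_support_element (a e : ℕ → ℕ) (ha : IsArithSeq a)
    (he : IsArithTypeSeq a e)
    (hx : ∃ x ∈ charSub e, ∃ c : ℕ → ℕ, IsCanonicalRep a c x ∧ (suppOf c).Infinite) :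
    ∃ y ∈ charSub e, ∃ c' : ℕ → ℕ, IsCanonicalRep a c' y ∧
      (suppOf c').Infinite ∧
      (∀ n ∈ suppOf c', n + 1 ∉ suppOf c') ∧
      Tendsto (fun n => ratioSeq a n) (atTop ⊓ 𝓟 (suppOf c')) atTop ∧
      Tendsto (fun n => (c' n : ℝ) / (ratioSeq a n : ℝ))
        (atTop ⊓ 𝓟 (suppOf c')) (nhds 0) := by
  obtain ⟨x, hx, c, ⟨hc, hlt, hxc⟩, hsupp⟩ := hx
  have hc' (n : ℕ) : c (n + 1) < ratioSeq a (n + 1) := by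
    have := hc (n + 1) n.succ_pos
    have := ha.two_le_ratioSeq n
    omega
  set ε : ℕ → ℝ := fun j => (1 / 2) ^ (j + 1)
  have hε : Summable ε := (summable_nat_add_iff 1).2 summable_geometric_two
  obtain ⟨p, hgap, hp⟩ := exists_add_two_le_of_frequently fun j =>
    frequently_isGoodDigit ha he hc' hxc hx hsupp hlt (ε := ε j) (by positivity)
  choose B hB0 hB using hp
  have hgap' (j : ℕ) : p j + 1 + 2 ≤ p (j + 1) + 1 := by have := hgap j; omega
  have hs := strictMono_of_add_two_le hgap'
  have hratio (j : ℕ) := (hB j).div_ratioSeq_le ha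
  have hBq (j : ℕ) := (hB j).lt_ratioSeq ha (pow_lt_one₀ (by norm_num) (by norm_num) j.succ_ne_zero)
  have hsupp' := suppOf_extend hs.injective (fun j => Nat.le_add_left 1 (p j)) fun j => (hB0 j).ne'
  refine ⟨_, mem_charSub_of_isGoodDigit ha he ((summable_extend_zero hs.injective).2 hε)
      fun n => isGoodDigit_extend hs.injective hB (n + 1), _,
    isCanonicalRep_extend ha hgap' hBq, ?_, ?_, ?_, ?_⟩ <;> rw [hsupp']
  · exact Set.infinite_range_of_injective hs.injective
  · rintro _ ⟨i, rfl⟩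
    exact add_one_notMem_range_of_add_two_le hgap' i
  · exact tendsto_ratioSeq_inf_principal_range hs hB0 hBq hratio hε.tendsto_atTop_zero
  · exact tendsto_extend_div_ratioSeq hs hratio hε.tendsto_atTop_zero
end
end

section
/- For any arithmetic sequence (a_n), the associated sequence (d_n) satisfies d_{n+1} ≤ 2·d_n for every n; consequently the characterized subgroup t_{(d_n)}(𝕋) is countable. -/
open Filter Topology

noncomputable section

/-- Key induction: if all multiples `r*y`, `1 ≤ r ≤ Q`, are within `1/4` of an integer,
then they are all within `1/4` of the corresponding multiple of a single integer `p`. -/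
lemma close_multiples (Q : ℕ) (hQ : 1 ≤ Q) (y : ℝ)
    (h : ∀ r : ℕ, 1 ≤ r → r ≤ Q → ∃ m : ℤ, |(r : ℝ) * y - m| < 1/4) :
    ∃ p : ℤ, ∀ r : ℕ, 1 ≤ r → r ≤ Q → (r : ℝ) * |y - p| < 1/4 := by
  obtain ⟨p, hp⟩ := h 1 le_rfl hQ
  have hp1 : |y - (p : ℝ)| < 1/4 := by simpa using hp
  refine ⟨p, ?_⟩
  intro r hr1
  induction r, hr1 using Nat.le_induction with
  | base => intro _; simpa using hp1
  | succ r hr ih =>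
    intro hrQ
    have ihr : (r : ℝ) * |y - p| < 1/4 := ih (le_trans (Nat.le_succ r) hrQ)
    obtain ⟨m, hm⟩ := h (r+1) (by omega) hrQ
    have hm' : |((r : ℝ) + 1) * y - m| < 1/4 := by push_cast at hm; exact hm
    have key : |(m : ℝ) - ((r : ℝ) + 1) * p| < 1 := by
      have e : (m : ℝ) - ((r : ℝ) + 1) * p =
          ((m : ℝ) - ((r : ℝ) + 1) * y) + ((r : ℝ) * (y - p) + (y - p)) := by ring
      have h1 : |(m : ℝ) - ((r : ℝ) + 1) * y| < 1/4 := by rwa [abs_sub_comm] at hm'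
      have h2 : |(r : ℝ) * (y - p)| < 1/4 := by
        rw [abs_mul, abs_of_nonneg (by positivity : (0:ℝ) ≤ (r:ℝ))]; exact ihr
      calc |(m : ℝ) - ((r : ℝ) + 1) * p|
          ≤ |(m : ℝ) - ((r : ℝ) + 1) * y| + |(r : ℝ) * (y - p) + (y - p)| := by
            rw [e]; exact abs_add_le _ _
        _ ≤ |(m : ℝ) - ((r : ℝ) + 1) * y| + (|(r : ℝ) * (y - p)| + |y - p|) := by
            gcongr; exact abs_add_le _ _
        _ < 1/4 + (1/4 + 1/4) := by gcongr
        _ < 1 := by norm_num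
    have hmp : m = ((r : ℤ) + 1) * p := by
      have : |(((m - ((r : ℤ) + 1) * p) : ℤ) : ℝ)| < 1 := by push_cast; exact key
      rw [← Int.cast_abs] at this
      have h3 : |m - ((r : ℤ) + 1) * p| < 1 := by exact_mod_cast this
      have h4 := Int.abs_lt_one_iff.mp h3
      omega
    have : ((m : ℝ)) = ((r : ℝ) + 1) * p := by rw [hmp]; push_cast; ring
    have final : |((r : ℝ) + 1) * y - ((r : ℝ) + 1) * p| < 1/4 := by
      rw [← this]; exact hm'
    have : ((r : ℝ) + 1) * |y - p| < 1/4 := by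
      rw [← abs_of_nonneg (by positivity : (0:ℝ) ≤ (r:ℝ)+1), ← abs_mul, mul_sub]
      exact final
    push_cast
    exact this



lemma arith_facts (a : ℕ → ℕ) (ha : IsArithSeq a) (k : ℕ) (hk : 1 ≤ k) :
    ratioSeq a k * a (k - 1) = a k ∧ 2 ≤ ratioSeq a k ∧ 1 ≤ a (k - 1) := by
  obtain ⟨ha0, hmono, hdvd⟩ := ha
  have h1 : ∀ n, 1 ≤ a n := fun n => ha0 ▸ hmono.monotone (Nat.zero_le n)
  have hdvd' : a (k - 1) ∣ a k := by
    have := hdvd (k - 1)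
    rwa [Nat.sub_add_cancel hk] at this
  have hlt : a (k - 1) < a k := hmono (by omega)
  have hmul : ratioSeq a k * a (k - 1) = a k := Nat.div_mul_cancel hdvd'
  refine ⟨hmul, ?_, h1 _⟩
  by_contra hcon
  push_neg at hcon
  interval_cases h : ratioSeq a k <;> omega

lemma rat_of_mem_charSub (a d : ℕ → ℕ) (ha : IsArithSeq a) (hd : IsDSeq a d)
    (x : Circle1) (hx : x ∈ charSub d) : ∃ q : ℚ, x = ((q : ℝ) : Circle1) := by
  obtain ⟨t, rfl⟩ := QuotientAddGroup.mk_surjective x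
  have hnsmul : ∀ n : ℕ, n • ((t : ℝ) : Circle1) = ((n * t : ℝ) : Circle1) := by
    intro n
    rw [← nsmul_eq_mul]
    exact (QuotientAddGroup.mk_nsmul _ t n).symm
  obtain ⟨N, hN⟩ := Metric.tendsto_atTop.mp hx (1/4) (by norm_num)
  -- any element of DSet at least d N is close to an integer after multiplying by t
  have hDset : ∀ m ∈ DSet a, d N ≤ m → ∃ z : ℤ, |(m : ℝ) * t - z| < 1/4 := by
    intro m hm hge
    rw [← hd.2] at hm
    obtain ⟨j, rfl⟩ := hm
    have hj : N ≤ j := hd.1.le_iff_le.mp hge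
    have hdist := hN j hj
    rw [dist_zero_right, hnsmul (d j), AddCircle.norm_eq] at hdist
    simp only [inv_one, one_mul, mul_one] at hdist
    exact ⟨round ((d j : ℝ) * t), hdist⟩
  obtain ⟨ha0, hmono, hdvd⟩ := ha
  have h1 : ∀ n, 1 ≤ a n := fun n => ha0 ▸ hmono.monotone (Nat.zero_le n)
  set K := d N with hK
  have haK : d N ≤ a K := hmono.le_apply
  -- level estimates
  have hlevel : ∀ k, K + 1 ≤ k →
      ∃ p : ℤ, (ratioSeq a k : ℝ) * |(a (k-1) : ℝ) * t - p| < 1/4 := by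
    intro k hk
    obtain ⟨hqa, hq2, ha1⟩ := arith_facts a ⟨ha0, hmono, hdvd⟩ k (by omega)
    have hclose : ∀ r : ℕ, 1 ≤ r → r ≤ ratioSeq a k →
        ∃ m : ℤ, |(r : ℝ) * ((a (k-1) : ℝ) * t) - m| < 1/4 := by
      intro r hr1 hr2
      have hmem : r * a (k - 1) ∈ DSet a := by
        rcases Nat.lt_or_ge r (ratioSeq a k) with hlt | hge
        · exact ⟨k, by omega, r, hr1, by omega, rfl⟩
        · have hreq : r = ratioSeq a k := le_antisymm hr2 hge
          refine ⟨k + 1, by omega, 1, le_rfl, ?_, ?_⟩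
          · obtain ⟨_, hq2', _⟩ := arith_facts a ⟨ha0, hmono, hdvd⟩ (k+1) (by omega)
            omega
          · simp only [Nat.add_sub_cancel, one_mul]
            rw [hreq, hqa]
      have hbig : d N ≤ r * a (k - 1) := by
        have h2 : a K ≤ a (k - 1) := hmono.monotone (by omega)
        have h3 : a (k-1) ≤ r * a (k-1) := Nat.le_mul_of_pos_left _ hr1
        omega
      obtain ⟨z, hz⟩ := hDset (r * a (k-1)) hmem hbig
      refine ⟨z, ?_⟩
      have : ((r * a (k-1) : ℕ) : ℝ) * t = (r : ℝ) * ((a (k-1) : ℝ) * t) := by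
        push_cast; ring
      rwa [this] at hz
    obtain ⟨p, hp⟩ := close_multiples (ratioSeq a k) (by omega) ((a (k-1) : ℝ) * t) hclose
    exact ⟨p, hp (ratioSeq a k) (by omega) le_rfl⟩
  choose! p hp using hlevel
  -- consequence 1 : |a (k-1) t - p k| < 1/(4 q_k); consequence 2 : |a k t - q_k p k| < 1/4
  have hc1 : ∀ k, K + 1 ≤ k → |(a (k-1) : ℝ) * t - p k| < 1 / (4 * ratioSeq a k) := by
    intro k hk
    obtain ⟨hqa, hq2, ha1⟩ := arith_facts a ⟨ha0, hmono, hdvd⟩ k (by omega)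
    have hqpos : (0:ℝ) < (ratioSeq a k : ℝ) := by exact_mod_cast (by omega : 0 < ratioSeq a k)
    have h := hp k hk
    rw [lt_div_iff₀ (by positivity)]
    nlinarith [h]
  have hc2 : ∀ k, K + 1 ≤ k →
      |(a k : ℝ) * t - (ratioSeq a k : ℝ) * p k| < 1/4 := by
    intro k hk
    obtain ⟨hqa, hq2, ha1⟩ := arith_facts a ⟨ha0, hmono, hdvd⟩ k (by omega)
    have e : (a k : ℝ) * t - (ratioSeq a k : ℝ) * p k
        = (ratioSeq a k : ℝ) * ((a (k-1) : ℝ) * t - p k) := by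
      rw [← hqa]; push_cast; ring
    rw [e, abs_mul, abs_of_nonneg (by positivity : (0:ℝ) ≤ (ratioSeq a k : ℝ))]
    exact hp k hk
  have hstep : ∀ k, K + 1 ≤ k → p (k+1) = (ratioSeq a k : ℤ) * p k := by
    intro k hk
    obtain ⟨hqa, hq2, ha1⟩ := arith_facts a ⟨ha0, hmono, hdvd⟩ k (by omega)
    obtain ⟨hqa', hq2', ha1'⟩ := arith_facts a ⟨ha0, hmono, hdvd⟩ (k+1) (by omega)
    have h2 := hc2 k hk
    have h1 := hc1 (k+1) (by omega)
    simp only [Nat.add_sub_cancel] at h1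
    have hqpos : (0:ℝ) < (ratioSeq a (k+1) : ℝ) := by
      exact_mod_cast (by omega : 0 < ratioSeq a (k+1))
    have h1' : |(a k : ℝ) * t - p (k+1)| < 1/4 := by
      refine lt_of_lt_of_le h1 ?_
      rw [div_le_div_iff₀ (by positivity) (by norm_num)]
      have h2q : (2:ℝ) ≤ (ratioSeq a (k+1) : ℝ) := by exact_mod_cast hq2'
      nlinarith
    have key : |((ratioSeq a k : ℝ) * p k - p (k+1))| < 1 := by
      have e : (ratioSeq a k : ℝ) * p k - p (k+1)
          = -((a k : ℝ) * t - (ratioSeq a k : ℝ) * p k) + ((a k : ℝ) * t - p (k+1)) := by ring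
      calc |((ratioSeq a k : ℝ) * p k - p (k+1))|
          ≤ |(a k : ℝ) * t - (ratioSeq a k : ℝ) * p k| + |(a k : ℝ) * t - p (k+1)| := by
            rw [e]; refine le_trans (abs_add_le _ _) ?_; rw [abs_neg]
        _ < 1/4 + 1/4 := by gcongr
        _ < 1 := by norm_num
    have : |(((ratioSeq a k : ℤ) * p k - p (k+1) : ℤ) : ℝ)| < 1 := by push_cast; exact key
    rw [← Int.cast_abs] at this
    have h3 : |(ratioSeq a k : ℤ) * p k - p (k+1)| < 1 := by exact_mod_cast this
    have h4 := Int.abs_lt_one_iff.mp h3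
    omega
  have hconst : ∀ k, K + 1 ≤ k →
      (p k : ℝ) / (a (k-1) : ℝ) = (p (K+1) : ℝ) / (a K : ℝ) := by
    intro k hk
    induction k, hk using Nat.le_induction with
    | base => simp
    | succ k hk ih =>
      obtain ⟨hqa, hq2, ha1⟩ := arith_facts a ⟨ha0, hmono, hdvd⟩ k (by omega)
      rw [← ih]
      simp only [Nat.add_sub_cancel]
      rw [hstep k hk, ← hqa]
      have hqne : ((ratioSeq a k : ℕ) : ℝ) ≠ 0 := by
        exact_mod_cast (by omega : ratioSeq a k ≠ 0)
      have hane : ((a (k-1) : ℕ) : ℝ) ≠ 0 := by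
        exact_mod_cast (by omega : a (k-1) ≠ 0)
      push_cast
      field_simp
  have hest : ∀ k, K + 1 ≤ k →
      |t - (p (K+1) : ℝ) / (a K : ℝ)| < 1 / (4 * (a k : ℝ)) := by
    intro k hk
    obtain ⟨hqa, hq2, ha1⟩ := arith_facts a ⟨ha0, hmono, hdvd⟩ k (by omega)
    have hApos : (0:ℝ) < (a (k-1) : ℝ) := by exact_mod_cast (by omega : 0 < a (k-1))
    have hQpos : (0:ℝ) < (ratioSeq a k : ℝ) := by exact_mod_cast (by omega : 0 < ratioSeq a k)
    have h := hc1 k hk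
    rw [← hconst k hk]
    have e2 : t - (p k : ℝ) / (a (k-1) : ℝ)
        = ((a (k-1) : ℝ) * t - p k) / (a (k-1) : ℝ) := by field_simp
    rw [e2, abs_div, abs_of_pos hApos, div_lt_iff₀ hApos]
    have hak : ((a k : ℕ) : ℝ) = (ratioSeq a k : ℝ) * (a (k-1) : ℝ) := by
      exact_mod_cast hqa.symm
    rw [hak]
    have e3 : 1 / (4 * ((ratioSeq a k : ℝ) * (a (k-1) : ℝ))) * (a (k-1) : ℝ)
        = 1 / (4 * (ratioSeq a k : ℝ)) := by field_simp
    rw [e3]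
    exact h
  set c : ℝ := (p (K+1) : ℝ) / (a K : ℝ) with hc
  have heq : t = c := by
    by_contra hne
    have hpos : 0 < |t - c| := abs_pos.mpr (sub_ne_zero.mpr hne)
    obtain ⟨k0, hk0⟩ := exists_nat_gt (1 / (4 * |t - c|))
    set k := max k0 (K+1) with hkdef
    have hk1 : K + 1 ≤ k := le_max_right _ _
    have hkk : (k0 : ℝ) ≤ (a k : ℝ) := by
      have h1' : k ≤ a k := hmono.le_apply
      have h2' : k0 ≤ k := le_max_left _ _
      exact_mod_cast le_trans h2' h1'
    have hakpos : (0:ℝ) < (a k : ℝ) := by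
      exact_mod_cast (by have := h1 k; omega : 0 < a k)
    have hgt : (1 / (4 * |t - c|) : ℝ) < (a k : ℝ) := lt_of_lt_of_le hk0 hkk
    have hlt2 : 1 / (4 * (a k : ℝ)) < |t - c| := by
      rw [div_lt_iff₀ (by positivity)]
      rw [div_lt_iff₀ (by positivity)] at hgt
      nlinarith
    have := hest k hk1
    linarith
  refine ⟨(p (K+1) : ℚ) / (a K : ℚ), ?_⟩
  have : t = (((p (K+1) : ℚ) / (a K : ℚ) : ℚ) : ℝ) := by rw [heq, hc]; push_cast; ring
  rw [this]


/-- the sequence `(d_n)` satisfies `d_{n+1} ≤ 2·d_n`, and consequently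
`t_{(d_n)}(𝕋)` is countable. -/
theorem dseq_ratio_le_two_and_countable (a d : ℕ → ℕ) (ha : IsArithSeq a)
    (hd : IsDSeq a d) :
    (∀ n, d (n + 1) ≤ 2 * d n) ∧ (charSub d).Countable := by
  have hnext : ∀ n m, m ∈ DSet a → d n < m → d (n + 1) ≤ m := by
    intro n m hm hlt
    rw [← hd.2] at hm
    obtain ⟨j, rfl⟩ := hm
    have hj : n < j := hd.1.lt_iff_lt.mp hlt
    exact hd.1.monotone (by omega : n + 1 ≤ j)
  constructor
  · intro n
    have hdn : d n ∈ DSet a := hd.2 ▸ Set.mem_range_self n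
    obtain ⟨k, hk, r, hr1, hr2, hdneq⟩ := hdn
    obtain ⟨hqa, hq2, ha1⟩ := arith_facts a ha k hk
    by_cases hcase : r + 1 ≤ ratioSeq a k - 1
    · have hmem : (r + 1) * a (k - 1) ∈ DSet a := ⟨k, hk, r + 1, by omega, hcase, rfl⟩
      have hexp : (r + 1) * a (k - 1) = r * a (k - 1) + a (k - 1) := by ring
      have hlt : d n < (r + 1) * a (k - 1) := by omega
      have hle := hnext n _ hmem hlt
      have hra : a (k - 1) ≤ r * a (k - 1) := Nat.le_mul_of_pos_left _ hr1
      omega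
    · have hreq : r = ratioSeq a k - 1 := by omega
      subst hreq
      obtain ⟨hqa', hq2', ha1'⟩ := arith_facts a ha (k + 1) (by omega)
      have hmem : a k ∈ DSet a := by
        refine ⟨k + 1, by omega, 1, le_rfl, by omega, ?_⟩
        simp
      have hexp : ratioSeq a k * a (k - 1)
          = (ratioSeq a k - 1) * a (k - 1) + a (k - 1) := by
        have h1 : ratioSeq a k = (ratioSeq a k - 1) + 1 := by omega
        conv_lhs => rw [h1]
        ring
      have hlt : d n < a k := by omega
      have hle := hnext n _ hmem hlt
      have h2r : ratioSeq a k * a (k - 1) ≤ (2 * (ratioSeq a k - 1)) * a (k - 1) :=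
        Nat.mul_le_mul_right _ (by omega)
      have hexp2 : (2 * (ratioSeq a k - 1)) * a (k - 1)
          = 2 * ((ratioSeq a k - 1) * a (k - 1)) := by ring
      omega
  · have hsub : charSub d ⊆ Set.range (fun q : ℚ => ((q : ℝ) : Circle1)) := by
      intro x hx
      obtain ⟨q, hq⟩ := rat_of_mem_charSub a d ha hd x hx
      exact ⟨q, hq.symm⟩
    exact Set.Countable.mono hsub (Set.countable_range _)
end
end

section
/- Let G be an infinite torsion subgroup of 𝕋 (every element of G has finite order). Then there exists an arithmetic sequence (a_n) such that G = ⋃_{n≥1} {x ∈ 𝕋 : a_n·x = 0}; that is, G is the increasing union of the (unique) finite cyclic subgroups of 𝕋 of orders a_1 | a_2 | a_3 | ⋯. -/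
/-! The orders of the elements of `G` form a set `S` of positive integers that is infinite (each
order is taken by only finitely many points of `𝕋`) and closed under `lcm` (two elements of an
abelian group with orders `m` and `n` generate an element of order `lcm m n`). Such a set carries a
strictly increasing divisibility chain `a` such that every element of `S` divides some term.
Finally, the `n`-torsion of `𝕋` has only `n` points, so it is generated by any point of order `n`;
hence it lies in `G` when `n ∈ S`, and `G` is the union of the `a n`-torsion subgroups. -/

open Filter Topology

noncomputable section

namespace AddCircle

variable {𝕜 : Type*} [Field 𝕜] [LinearOrder 𝕜] [IsStrictOrderedRing 𝕜] {p : 𝕜}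

theorem mem_zmultiples_of_addOrderOf_nsmul_eq_zero {x u : AddCircle p}
    (hx : IsOfFinAddOrder x) (hu : addOrderOf x • u = 0) : u ∈ AddSubgroup.zmultiples x := by
  have hn : 0 < addOrderOf x := hx.addOrderOf_pos
  have hsub : (AddSubgroup.zmultiples x : Set (AddCircle p)) ⊆ {u | addOrderOf x • u = 0} := by
    rintro _ ⟨k, rfl⟩
    rw [Set.mem_ofPred_eq, smul_comm, addOrderOf_nsmul_eq_zero, smul_zero]
  have hfin : (AddSubgroup.zmultiples x : Set (AddCircle p)).Finite :=
    (finite_torsion p hn).subset hsub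
  have hcard : {u : AddCircle p | addOrderOf x • u = 0}.encard ≤
      (AddSubgroup.zmultiples x : Set (AddCircle p)).encard := by
    rw [← hfin.cast_ncard_eq, ← Nat.card_coe_set_eq, SetLike.coe_sort_coe, Nat.card_zmultiples]
    exact card_torsion_le_of_isSMulRegular p _ hn.ne'
      (.of_right_eq_zero_of_smul fun _ ↦ by simp [hn.ne'])
  rw [← SetLike.mem_coe, hfin.eq_of_subset_of_encard_le hsub hcard]
  exact hu

theorem infinite_addOrderOf_image {G : Set (AddCircle p)} (hG : G.Infinite)
    (htor : ∀ x ∈ G, IsOfFinAddOrder x) : (addOrderOf '' G).Infinite := by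
  refine fun hfin ↦ hG ((hfin.preimage' fun n hn ↦ ?_).subset (Set.subset_preimage_image _ _))
  obtain ⟨x, hx, rfl⟩ := hn
  exact finite_setOfPred_addOrderOf_eq p (htor x hx).addOrderOf_pos

end AddCircle

theorem AddSubgroup.lcm_mem_addOrderOf_image {A : Type*} [AddCommGroup A] (G : AddSubgroup A)
    {m n : ℕ} (hm : m ∈ addOrderOf '' (G : Set A)) (hn : n ∈ addOrderOf '' (G : Set A)) :
    m.lcm n ∈ addOrderOf '' (G : Set A) := by
  obtain ⟨x, hx, rfl⟩ := hm
  obtain ⟨y, hy, rfl⟩ := hn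
  obtain ⟨z, hz, hzxy⟩ := (AddCommute.all x y).exists_addOrderOf_eq_lcm
  have hclosure : AddSubmonoid.closure {x, y} ≤ G.toAddSubmonoid :=
    AddSubmonoid.closure_le.2 (Set.insert_subset hx (Set.singleton_subset_iff.2 hy))
  exact ⟨z, hclosure hz, hzxy⟩

namespace Nat

/-- Each step takes the lcm with the next element of `S` (so that every element of `S` divides
some term) and with an element of `S` beyond the current term (so that the chain grows). -/
def lcmChain (S : Set ℕ) : ℕ → ℕ
  | 0 => 1
  | n + 1 => (lcmChain S n).lcm ((nth (· ∈ S) n).lcm (nth (· ∈ S) (lcmChain S n + 1)))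

variable {S : Set ℕ}

theorem lcmChain_dvd_succ (n : ℕ) : lcmChain S n ∣ lcmChain S (n + 1) :=
  Nat.dvd_lcm_left _ _

theorem nth_dvd_lcmChain_succ (n : ℕ) : nth (· ∈ S) n ∣ lcmChain S (n + 1) :=
  (Nat.dvd_lcm_left _ _).trans (Nat.dvd_lcm_right _ _)

theorem lcmChain_succ_mem (hS : S.Infinite) (hlcm : ∀ m ∈ S, ∀ n ∈ S, m.lcm n ∈ S) (n : ℕ) :
    lcmChain S (n + 1) ∈ S := by
  have hnth (k : ℕ) : nth (· ∈ S) k ∈ S := nth_mem_of_infinite hS k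
  induction n with
  | zero => simpa [lcmChain] using hlcm _ (hnth _) _ (hnth _)
  | succ n ih => exact hlcm _ ih _ (hlcm _ (hnth _) _ (hnth _))

theorem lcmChain_strictMono (hS : S.Infinite) (h0 : 0 ∉ S)
    (hlcm : ∀ m ∈ S, ∀ n ∈ S, m.lcm n ∈ S) : StrictMono (lcmChain S) := by
  refine strictMono_nat_of_lt_succ fun n ↦ ?_
  have hpos : 0 < lcmChain S (n + 1) :=
    Nat.pos_of_ne_zero fun h ↦ h0 (h ▸ lcmChain_succ_mem hS hlcm n)
  calc lcmChain S n < nth (· ∈ S) (lcmChain S n + 1) := (nth_strictMono hS).id_le _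
    _ ≤ lcmChain S (n + 1) :=
      Nat.le_of_dvd hpos ((Nat.dvd_lcm_right _ _).trans (Nat.dvd_lcm_right _ _))

theorem isArithSeq_lcmChain (hS : S.Infinite) (h0 : 0 ∉ S)
    (hlcm : ∀ m ∈ S, ∀ n ∈ S, m.lcm n ∈ S) : IsArithSeq (lcmChain S) :=
  ⟨rfl, lcmChain_strictMono hS h0 hlcm, lcmChain_dvd_succ⟩

theorem exists_dvd_lcmChain_succ (hS : S.Infinite) {m : ℕ} (hm : m ∈ S) :
    ∃ n, m ∣ lcmChain S (n + 1) := by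
  obtain ⟨n, rfl⟩ : m ∈ Set.range (nth (· ∈ S)) := range_nth_of_infinite (p := (· ∈ S)) hS ▸ hm
  exact ⟨n, nth_dvd_lcmChain_succ n⟩

end Nat

/-- every infinite torsion subgroup of `𝕋` is the increasing union of the
finite cyclic subgroups `{x : a_n · x = 0}` for some arithmetic sequence `(a_n)`. -/
theorem torsion_subgroup_union_cyclic (G : AddSubgroup Circle1)
    (hGinf : (G : Set Circle1).Infinite) (hGtor : ∀ x ∈ G, IsOfFinAddOrder x) :
    ∃ a : ℕ → ℕ, IsArithSeq a ∧
      (G : Set Circle1) = ⋃ n ∈ {n : ℕ | 1 ≤ n}, {x : Circle1 | (a n) • x = 0} := by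
  set S := addOrderOf '' (G : Set Circle1)
  have hS : S.Infinite := AddCircle.infinite_addOrderOf_image hGinf hGtor
  have h0 : 0 ∉ S := by
    rintro ⟨x, hx, h⟩
    exact (hGtor x hx).addOrderOf_pos.ne' h
  have hlcm : ∀ m ∈ S, ∀ n ∈ S, m.lcm n ∈ S := fun m hm n hn ↦
    G.lcm_mem_addOrderOf_image hm hn
  refine ⟨Nat.lcmChain S, Nat.isArithSeq_lcmChain hS h0 hlcm, Set.Subset.antisymm ?_ ?_⟩
  · intro x hx
    obtain ⟨n, hn⟩ := Nat.exists_dvd_lcmChain_succ hS ⟨x, hx, rfl⟩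
    exact Set.mem_biUnion (Nat.le_add_left 1 n) (addOrderOf_dvd_iff_nsmul_eq_zero.1 hn)
  · simp only [Set.iUnion_subset_iff]
    rintro (_ | n) hn x hx
    · exact absurd hn (by decide)
    obtain ⟨y, hy, hyn⟩ := Nat.lcmChain_succ_mem hS hlcm n
    rw [Set.mem_ofPred_eq, ← hyn] at hx
    exact AddSubgroup.zmultiples_le_of_mem hy
      (AddCircle.mem_zmultiples_of_addOrderOf_nsmul_eq_zero (hGtor y hy) hx)
end
end
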